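/- For every integer m ≥ 1, the weight set of the ternary Reed–Muller code RM_3(2m−2, m) equals {0} ∪ {3, 4, 5, …, 3^m}. -/

import Mathlib

/-- Hamming weight: the number of nonzero coordinates. -/
noncomputable def hwt {ι F : Type*} [Zero F] (c : ι → F) : ℕ := Set.ncard {i | c i ≠ 0}

/-- The `q`-ary Reed–Muller code of order `s` in `m` variables over the field `F` of
cardinality `q`: all evaluation vectors, on the points of `F^m`, of `m`-variate
polynomials of total degree at most `s`. -/
def RMcode (F : Type*) [CommSemiring F] (s m : ℕ) : Set ((Fin m → F) → F) :=
  {c | ∃ f : MvPolynomial (Fin m) F, f.totalDegree ≤ s ∧ ∀ P, MvPolynomial.eval P f = c P}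

/-!
Over `F_q`, every polynomial of total degree `< (q - 1) m` sums to zero over `F_q^m`. Applied to
`f` and to the `f * X i`, this says that a codeword of `RM_q(s, m)` with `s + 1 < (q - 1) m` has
nonzero values summing to zero and with zero first moments, which a support of one or two points
cannot have; hence nonzero weights are at least `3`.

Conversely, codewords `c_y ∈ RM_q(s, m)` indexed by `y ∈ F_q` glue to the codeword
`∑ y, c_y(x) (1 - (x_0 - y)^(q-1))` of `RM_q(s + q - 1, m + 1)`, whose weight is the sum of theirs.
For `q = 3` the weights `3, …, 9` of `RM_3(2, 2)` are realised by explicit quadrics, and every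
number in `{0} ∪ [3, 3^(m+1)]` is a sum of three numbers in `{0} ∪ [3, 3^m]`, so induction on `m`
realises every weight.
-/

open MvPolynomial

section HammingWeight

variable {ι κ F : Type*} [Zero F]

lemma hwt_eq_natCard (c : ι → F) : hwt c = Nat.card {i // c i ≠ 0} :=
  (Nat.card_coe_set_eq _).symm

lemma hwt_eq_card_filter [Fintype ι] [DecidableEq F] (c : ι → F) :
    hwt c = (Finset.univ.filter fun i => c i ≠ 0).card := by
  rw [hwt, Set.ncard_eq_toFinset_card', Set.toFinset_ofPred]

lemma hwt_zero : hwt (0 : ι → F) = 0 := by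
  simp [hwt]

lemma hwt_const {a : F} (ha : a ≠ 0) : hwt (fun _ : ι => a) = Nat.card ι := by
  simp [hwt, ha]

lemma hwt_le_natCard [Finite ι] (c : ι → F) : hwt c ≤ Nat.card ι :=
  Set.ncard_le_card _

lemma hwt_comp_equiv (e : κ ≃ ι) (c : ι → F) : hwt (c ∘ e) = hwt c := by
  simp only [hwt_eq_natCard]
  exact Nat.card_congr (e.subtypeEquiv fun _ => Iff.rfl)

lemma hwt_uncurry [Fintype ι] [Finite κ] (c : ι → κ → F) :
    hwt (fun p : ι × κ => c p.1 p.2) = ∑ i, hwt (c i) := by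
  simp only [hwt_eq_natCard]
  rw [Nat.card_congr (Equiv.subtypeProdEquivSigmaSubtype fun i k => c i k ≠ 0), Nat.card_sigma]

end HammingWeight

lemma zero_mem_RMcode (F : Type*) [CommSemiring F] (s m : ℕ) : 0 ∈ RMcode F s m :=
  ⟨0, by simp, fun _ => by simp⟩

lemma const_mem_RMcode {F : Type*} [CommSemiring F] (a : F) (s m : ℕ) :
    (fun _ => a) ∈ RMcode F s m :=
  ⟨C a, by simp, fun _ => by simp⟩

section FiniteField

variable {K : Type*} [Field K] [Fintype K]

lemma hwt_eq_zero_or_three_le_of_moments {σ : Type*} [Fintype σ] [DecidableEq σ]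
    (c : (σ → K) → K) (h₀ : ∑ P, c P = 0) (h₁ : ∀ i, ∑ P, c P * P i = 0) :
    hwt c = 0 ∨ 3 ≤ hwt c := by
  rcases (by omega : hwt c = 0 ∨ hwt c = 1 ∨ hwt c = 2 ∨ 3 ≤ hwt c) with h | h | h | h
  · exact .inl h
  · obtain ⟨P, hP⟩ := Set.ncard_eq_one.mp h
    have hsupp : ∀ Q, c Q ≠ 0 ↔ Q = P := by simpa using Set.ext_iff.mp hP
    rw [Fintype.sum_eq_single P fun Q hQ => not_not.mp (mt (hsupp Q).mp hQ)] at h₀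
    exact absurd h₀ ((hsupp P).mpr rfl)
  · obtain ⟨P, Q, hPQ, hPQ'⟩ := Set.ncard_eq_two.mp h
    have hsupp : ∀ R, c R ≠ 0 ↔ R = P ∨ R = Q := by simpa using Set.ext_iff.mp hPQ'
    have hzero : ∀ R, R ≠ P ∧ R ≠ Q → c R = 0 := fun R hR =>
      not_not.mp (mt (hsupp R).mp (by tauto))
    refine absurd (_root_.funext fun i => ?_) hPQ
    have hi := h₁ i
    rw [Fintype.sum_eq_add P Q hPQ fun R hR => by simp [hzero R hR]] at hi
    rw [Fintype.sum_eq_add P Q hPQ hzero] at h₀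
    have : c P * (P i - Q i) = 0 := by linear_combination hi - Q i * h₀
    exact sub_eq_zero.mp ((mul_eq_zero.mp this).resolve_left ((hsupp P).mpr (.inl rfl)))
  · exact .inr h

lemma hwt_eval_eq_zero_or_three_le {σ : Type*} [Fintype σ] [DecidableEq σ]
    (f : MvPolynomial σ K) (hf : f.totalDegree + 1 < (Fintype.card K - 1) * Fintype.card σ) :
    hwt (fun P => eval P f) = 0 ∨ 3 ≤ hwt (fun P => eval P f) := by
  refine hwt_eq_zero_or_three_le_of_moments _ (sum_eval_eq_zero f (by omega)) fun i => ?_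
  have hdeg : (f * X i).totalDegree < (Fintype.card K - 1) * Fintype.card σ :=
    (totalDegree_mul _ _).trans_lt (by simpa using hf)
  simpa using sum_eval_eq_zero _ hdeg

lemma one_sub_sub_pow_card_sub_one [DecidableEq K] (a b : K) :
    1 - (a - b) ^ (Fintype.card K - 1) = if a = b then 1 else 0 := by
  split_ifs with h
  · rw [h, sub_self, zero_pow (Nat.sub_ne_zero_of_lt Fintype.one_lt_card), sub_zero]
  · rw [FiniteField.pow_card_sub_one_eq_one _ (sub_ne_zero.mpr h), sub_self]

lemma exists_mem_RMcode_hwt_eq_sum {s m : ℕ} (c : K → (Fin m → K) → K)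
    (hc : ∀ y, c y ∈ RMcode K s m) :
    ∃ c' ∈ RMcode K (s + (Fintype.card K - 1)) (m + 1), hwt c' = ∑ y, hwt (c y) := by
  classical
  choose f hfdeg hfeval using hc
  set δ : K → MvPolynomial (Fin (m + 1)) K := fun y => 1 - (X 0 - C y) ^ (Fintype.card K - 1)
  have hδdeg : ∀ y, (δ y).totalDegree ≤ Fintype.card K - 1 := fun y =>
    (totalDegree_sub _ _).trans <| max_le (by simp) <| (totalDegree_pow _ _).trans <| by
      simpa using Nat.mul_le_mul_left _ ((totalDegree_sub_C_le _ _).trans (totalDegree_X _).le)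
  have hδeval : ∀ P y, eval P (δ y) = if P 0 = y then 1 else 0 := fun P y => by
    simp [δ, one_sub_sub_pow_card_sub_one]
  refine ⟨fun P => c (P 0) (Fin.tail P), ⟨∑ y, rename Fin.succ (f y) * δ y, ?_, fun P => ?_⟩, ?_⟩
  · refine (totalDegree_finsetSum _ _).trans (Finset.sup_le fun y _ => ?_)
    exact (totalDegree_mul _ _).trans
      (add_le_add ((totalDegree_rename_le _ _).trans (hfdeg y)) (hδdeg y))
  · simp [hδeval, eval_rename, ← hfeval, Fin.tail_def, Function.comp_def]
  · rw [← hwt_comp_equiv (Fin.consEquiv fun _ => K), ← hwt_uncurry]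
    rfl

end FiniteField

lemma exists_add_eq_of_mem_union_Icc {N k w : ℕ} (hN : 6 ≤ N)
    (hw : w ∈ ({0} ∪ Set.Icc 3 ((k + 1) * N) : Set ℕ)) :
    ∃ a ∈ ({0} ∪ Set.Icc 3 N : Set ℕ), ∃ b ∈ ({0} ∪ Set.Icc 3 (k * N) : Set ℕ), a + b = w := by
  simp only [Set.mem_union, Set.mem_singleton_iff, Set.mem_Icc, add_one_mul] at hw ⊢
  have hkN : k * N = 0 ∨ N ≤ k * N := by
    rcases k.eq_zero_or_pos with rfl | hk
    exacts [.inl (zero_mul N), .inr (Nat.le_mul_of_pos_left N hk)]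
  by_cases hwN : w ≤ N
  · exact ⟨w, by omega, 0, by omega, by omega⟩
  · exact ⟨min N (w - 3), by omega, w - min N (w - 3), by omega, by omega⟩

lemma exists_fin_sum_eq_of_mem_union_Icc {N : ℕ} (hN : 6 ≤ N) :
    ∀ {k w : ℕ}, w ∈ ({0} ∪ Set.Icc 3 (k * N) : Set ℕ) →
      ∃ v : Fin k → ℕ, (∀ i, v i ∈ ({0} ∪ Set.Icc 3 N : Set ℕ)) ∧ ∑ i, v i = w
  | 0, w, hw => ⟨Fin.elim0, nofun, by simp_all⟩
  | k + 1, w, hw => by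
    obtain ⟨a, ha, b, hb, rfl⟩ := exists_add_eq_of_mem_union_Icc hN hw
    obtain ⟨v, hv, rfl⟩ := exists_fin_sum_eq_of_mem_union_Icc hN hb
    exact ⟨Fin.cons a v, Fin.cases ha hv, Fin.sum_cons a v⟩

lemma exists_sum_eq_of_mem_union_Icc {ι : Type*} [Fintype ι] {N w : ℕ} (hN : 6 ≤ N)
    (hw : w ∈ ({0} ∪ Set.Icc 3 (Fintype.card ι * N) : Set ℕ)) :
    ∃ v : ι → ℕ, (∀ i, v i ∈ ({0} ∪ Set.Icc 3 N : Set ℕ)) ∧ ∑ i, v i = w := by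
  obtain ⟨v, hv, rfl⟩ := exists_fin_sum_eq_of_mem_union_Icc hN hw
  exact ⟨v ∘ Fintype.equivFin ι, fun i => hv _, Equiv.sum_comp _ v⟩

lemma exists_mem_RMcode_ternary_two_two_hwt_eq {w : ℕ} (hw : w ∈ Set.Icc 3 9) :
    ∃ c ∈ RMcode (ZMod 3) 2 2, hwt c = w := by
  suffices ∃ f ∈ restrictTotalDegree (Fin 2) (ZMod 3) 2, hwt (fun P => eval P f) = w by
    obtain ⟨f, hf, rfl⟩ := this
    exact ⟨_, ⟨f, (mem_restrictTotalDegree _ _ _).mp hf, fun _ => rfl⟩, rfl⟩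
  obtain ⟨h3, h9⟩ := hw
  interval_cases w <;> [
    refine ⟨1 - X 0 ^ 2, ?_⟩;
    refine ⟨X 0 ^ 2 - X 1 ^ 2, ?_⟩;
    refine ⟨X 0 ^ 2 + X 1 ^ 2 - 1, ?_⟩;
    refine ⟨X 0 ^ 2 - X 1, ?_⟩;
    refine ⟨X 0 ^ 2 - X 1 ^ 2 - 1, ?_⟩;
    refine ⟨X 0 ^ 2 + X 1 ^ 2, ?_⟩;
    refine ⟨1, ?_⟩]
  all_goals
    constructor
    · try apply_rules [Submodule.add_mem, Submodule.sub_mem]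
      all_goals simp [mem_restrictTotalDegree]
    · simp only [map_one, map_add, map_sub, map_pow, eval_X, hwt_eq_card_filter]
      decide

lemma exists_mem_RMcode_ternary_hwt_eq {m : ℕ} (hm : 2 ≤ m) {w : ℕ}
    (hw : w ∈ ({0} ∪ Set.Icc 3 (3 ^ m) : Set ℕ)) :
    ∃ c ∈ RMcode (ZMod 3) (2 * m - 2) m, hwt c = w := by
  induction m, hm using Nat.le_induction generalizing w with
  | base =>
    rcases hw with rfl | hw
    · exact ⟨0, zero_mem_RMcode _ _ _, hwt_zero⟩
    · exact exists_mem_RMcode_ternary_two_two_hwt_eq hw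
  | succ m hm ih =>
    have h6 : 6 ≤ 3 ^ m := le_trans (by norm_num) (Nat.pow_le_pow_right three_pos hm)
    obtain ⟨v, hv, rfl⟩ :=
      exists_sum_eq_of_mem_union_Icc (ι := ZMod 3) h6 (by rwa [ZMod.card, ← pow_succ'])
    choose c hc hcv using fun y => ih (hv y)
    obtain ⟨c', hc', hc'v⟩ := exists_mem_RMcode_hwt_eq_sum c hc
    refine ⟨c', ?_, by simp [hc'v, hcv]⟩
    rwa [ZMod.card, show 2 * m - 2 + (3 - 1) = 2 * (m + 1) - 2 by omega] at hc'

/-- For `m ≥ 1`, the weight set of the ternary Reed–Muller code `RM_3(2m-2, m)` equals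
`{0} ∪ {3, 4, 5, …, 3^m}`. -/
theorem stmt16 (m : ℕ) (hm : 1 ≤ m) :
    {w : ℕ | ∃ c ∈ RMcode (ZMod 3) (2 * m - 2) m, hwt c = w}
      = {0} ∪ Set.Icc 3 (3 ^ m) := by
  refine Set.Subset.antisymm ?_ fun w hw => ?_
  · rintro _ ⟨c, ⟨f, hf, hfc⟩, rfl⟩
    obtain rfl : (fun P => eval P f) = c := funext hfc
    have hle := hwt_le_natCard fun P : Fin m → ZMod 3 => eval P f
    have h3 := hwt_eval_eq_zero_or_three_le f (by simp only [ZMod.card, Fintype.card_fin]; omega)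
    rw [Nat.card_eq_fintype_card, Fintype.card_fun, ZMod.card, Fintype.card_fin] at hle
    simp only [Set.mem_union, Set.mem_singleton_iff, Set.mem_Icc]
    omega
  · rcases hw with rfl | hw
    · exact ⟨0, zero_mem_RMcode _ _ _, hwt_zero⟩
    rcases hm.eq_or_lt with rfl | hm
    · obtain rfl : w = 3 := le_antisymm (by simpa using hw.2) hw.1
      refine ⟨fun _ => 1, const_mem_RMcode _ _ _, ?_⟩
      rw [hwt_const one_ne_zero, Nat.card_eq_fintype_card, Fintype.card_fun, ZMod.card,
        Fintype.card_fin, pow_one]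
    · exact exists_mem_RMcode_ternary_hwt_eq hm (.inr hw)
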